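/- arXiv:2012.02547 — 4 statements merged into one kernel-verified Lean document; each statement's English description precedes it below -/
import Mathlib

section
/- Let K be a nonempty compact convex subset of the Euclidean plane ℝ², and let A, C ∈ ℝ² be points with A ∉ interior K and C ∉ interior K. Then there exists a point B' in the topological frontier of K such that ‖A − B'‖ + ‖B' − C‖ ≤ ‖A − B‖ + ‖B − C‖ for every B ∈ K. -/
/-!
Take a minimiser `B₀` of `B ↦ ‖A - B‖ + ‖B - C‖` on the compact set `K`. If `B₀` is an interior
point, the segment from `A ∉ interior K` to `B₀` leaves the interior, so by connectedness it
crosses the frontier at some `B'`. Moving from `B₀` to `B'` towards `A` shortens the first leg by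
exactly `‖B' - B₀‖` and lengthens the second by at most that much, so `B'` is a minimiser too.
-/

open Set

lemma IsPreconnected.inter_frontier_nonempty {X : Type*} [TopologicalSpace X] {s t : Set X}
    (hs : IsPreconnected s) (hst : (s ∩ t).Nonempty) (hst' : (s \ t).Nonempty) :
    (s ∩ frontier t).Nonempty := by
  by_contra h
  have hcover : s ⊆ interior t ∪ interior tᶜ := by
    rw [← compl_frontier_eq_union_interior]
    exact fun x hx hxf => h ⟨x, hx, hxf⟩
  have hdisj : Disjoint (interior t) (interior tᶜ) :=
    disjoint_compl_right.mono interior_subset interior_subset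
  rcases hs.subset_or_subset isOpen_interior isOpen_interior hdisj hcover with hin | hout
  · obtain ⟨x, hxs, hxt⟩ := hst'
    exact hxt (interior_subset (hin hxs))
  · obtain ⟨x, hxs, hxt⟩ := hst
    exact interior_subset (hout hxs) hxt

section NormedSpace

variable {E : Type*} [NormedAddCommGroup E] [NormedSpace ℝ E]

lemma exists_mem_segment_mem_frontier {K : Set E} {A B : E} (hA : A ∉ interior K)
    (hB : B ∈ interior K) : ∃ B' ∈ segment ℝ A B, B' ∈ frontier K := by
  obtain ⟨B', hB'seg, hB'fr⟩ := (convex_segment A B).isPreconnected.inter_frontier_nonempty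
    ⟨B, right_mem_segment ℝ A B, hB⟩ ⟨A, left_mem_segment ℝ A B, hA⟩
  exact ⟨B', hB'seg, frontier_interior_subset hB'fr⟩

lemma norm_sub_add_norm_sub_le_of_mem_segment {A B B' : E} (C : E) (hB' : B' ∈ segment ℝ A B) :
    ‖A - B'‖ + ‖B' - C‖ ≤ ‖A - B‖ + ‖B - C‖ := by
  have hsplit : ‖A - B'‖ + ‖B' - B‖ = ‖A - B‖ := by
    simpa only [dist_eq_norm] using dist_add_dist_of_mem_segment hB'
  linarith [norm_sub_le_norm_sub_add_norm_sub B' B C]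

end NormedSpace

theorem stmt_2_general (K : Set (EuclideanSpace ℝ (Fin 2))) (hKne : K.Nonempty)
    (hKcpt : IsCompact K)
    (A C : EuclideanSpace ℝ (Fin 2))
    (hA : A ∉ interior K) :
    ∃ B' ∈ frontier K, ∀ B ∈ K, ‖A - B'‖ + ‖B' - C‖ ≤ ‖A - B‖ + ‖B - C‖ := by
  have hcont : Continuous fun B : EuclideanSpace ℝ (Fin 2) => ‖A - B‖ + ‖B - C‖ := by
    fun_prop
  obtain ⟨B₀, hB₀K, hB₀min⟩ := hKcpt.exists_isMinOn hKne hcont.continuousOn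
  by_cases hB₀int : B₀ ∈ interior K
  · obtain ⟨B', hB'seg, hB'fr⟩ := exists_mem_segment_mem_frontier hA hB₀int
    exact ⟨B', hB'fr, fun B hB =>
      (norm_sub_add_norm_sub_le_of_mem_segment C hB'seg).trans (hB₀min hB)⟩
  · exact ⟨B₀, ⟨subset_closure hB₀K, hB₀int⟩, fun B hB => hB₀min hB⟩

/-- Any point selected in an optimal solution of the XPPN can be placed on the
boundary of its neighborhood: there is a frontier point of `K` whose two-leg
cost from `A` to `C` is at most that of any point of `K`. -/
theorem stmt_2 (K : Set (EuclideanSpace ℝ (Fin 2))) (hKne : K.Nonempty)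
    (hKcpt : IsCompact K) (hKconv : Convex ℝ K)
    (A C : EuclideanSpace ℝ (Fin 2))
    (hA : A ∉ interior K) (hC : C ∉ interior K) :
    ∃ B' ∈ frontier K, ∀ B ∈ K, ‖A - B'‖ + ‖B' - C‖ ≤ ‖A - B‖ + ‖B - C‖ :=
  stmt_2_general K hKne hKcpt A C hA
end

section
/- Let n : ℕ, let v₁ be a distinguished element of Fin n (city 1), let s : Fin n → ℝ, and let z : Fin n → Fin n → ℝ take values in {0, 1} and satisfy n·(z v w) + s v − s w ≤ n − 1 for all v, w ∈ Fin n with v ≠ v₁ and w ≠ v₁. Then there is no closed walk v₀, v₁', …, v_k = v₀ with k ≥ 1 such that v_i ≠ v₁ for all i and z (v_i) (v_{i+1}) = 1 for all i < k. Equivalently, every closed sequence of cities using only edges with z = 1 must pass through the distinguished city v₁. -/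
/-! With `z v w = 1` the Miller–Tucker–Zemlin inequality reads `s v + 1 ≤ s w`, so the potential
`s` strictly increases along every edge of a walk avoiding `v₁`; a closed walk of positive length
would return to a strictly larger value of `s` at its starting city. -/

theorem lt_of_mtz_of_eq_one {N x a b : ℝ} (h : N * x + a - b ≤ N - 1) (hx : x = 1) : a < b := by
  subst hx
  linarith

theorem stmt_11_general (n : ℕ) (v₁ : Fin n) (s : Fin n → ℝ) (z : Fin n → Fin n → ℝ)
    (hmtz : ∀ v w, v ≠ v₁ → w ≠ v₁ →
      (n : ℝ) * z v w + s v - s w ≤ (n : ℝ) - 1) :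
    ¬ ∃ (k : ℕ) (w : ℕ → Fin n), 1 ≤ k ∧ w k = w 0 ∧
        (∀ i ≤ k, w i ≠ v₁) ∧ (∀ i < k, z (w i) (w (i + 1)) = 1) := by
  rintro ⟨k, w, hk, hclose, hne, hedge⟩
  have hmono : StrictMonoOn (s ∘ w) (Set.Iic k) := strictMonoOn_Iic_of_lt_succ fun i hi =>
    lt_of_mtz_of_eq_one (hmtz _ _ (hne i hi.le) (hne (i + 1) hi)) (hedge i hi)
  have hlt : s (w 0) < s (w k) := hmono (Nat.zero_le k) Set.self_mem_Iic hk
  exact hlt.ne (congrArg s hclose).symm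

/-- Under the Miller–Tucker–Zemlin constraints (imposed on all edges not
touching a distinguished city `v₁`) with binary variables `z`, there is no
closed walk of positive length avoiding `v₁` all of whose edges have `z = 1`;
i.e. every closed sequence of cities must pass through city `v₁`. -/
theorem stmt_11 (n : ℕ) (v₁ : Fin n) (s : Fin n → ℝ) (z : Fin n → Fin n → ℝ)
    (hz01 : ∀ v w, z v w = 0 ∨ z v w = 1)
    (hmtz : ∀ v w, v ≠ v₁ → w ≠ v₁ →
      (n : ℝ) * z v w + s v - s w ≤ (n : ℝ) - 1) :
    ¬ ∃ (k : ℕ) (w : ℕ → Fin n), 1 ≤ k ∧ w k = w 0 ∧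
        (∀ i ≤ k, w i ≠ v₁) ∧ (∀ i < k, z (w i) (w (i + 1)) = 1) :=
  stmt_11_general n v₁ s z hmtz
end

section
/- Let V be a finite type and let σ be a permutation of V that is a single cycle whose support is all of V (i.e. σ.IsCycle and σ.support = Finset.univ). Then for every nonempty finite set S ⊆ V with S ≠ Finset.univ, the number of elements v ∈ S with σ v ∈ S is at most |S| − 1. -/
open Finset

theorem Equiv.Perm.IsCycle.mem_of_mapsTo {α : Type*} [Finite α] {σ : Equiv.Perm α}
    (hσ : σ.IsCycle) {s : Set α} (hs : Set.MapsTo σ s s) {x y : α} (hx : x ∈ s)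
    (hσx : σ x ≠ x) (hσy : σ y ≠ y) : y ∈ s := by
  obtain ⟨n, rfl⟩ := hσ.exists_pow_eq hσx hσy
  rw [Equiv.Perm.coe_pow]
  exact hs.iterate n hx

/-- Validity of the subtour elimination constraints: if the successor
permutation `σ` of a tour is a single cycle covering all vertices, then for
every nonempty proper subset `S` of vertices, the number of tour edges with
both endpoints in `S` is at most `|S| - 1`. -/
theorem stmt_13 {V : Type*} [Fintype V] [DecidableEq V]
    (σ : Equiv.Perm V) (hcyc : σ.IsCycle) (hsupp : σ.support = Finset.univ)
    (S : Finset V) (hSne : S.Nonempty) (hSproper : S ≠ Finset.univ) :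
    (S.filter fun v => σ v ∈ S).card ≤ S.card - 1 := by
  have hmoved (v : V) : σ v ≠ v := Equiv.Perm.mem_support.1 (hsupp ▸ mem_univ v)
  have hleaves : ∃ v ∈ S, σ v ∉ S := by
    by_contra! hclosed
    obtain ⟨x, hx⟩ := hSne
    exact hSproper <| eq_univ_of_forall fun y =>
      hcyc.mem_of_mapsTo (s := S) hclosed hx (hmoved x) (hmoved y)
  have hlt : (S.filter fun v => σ v ∈ S).card < S.card :=
    card_lt_card (filter_ssubset.2 hleaves)
  omega
end

section
/- Let n ≥ 3 and let z : Fin n → Fin n → ℝ satisfy: 0 ≤ z v w ≤ 1 for all v, w; z v v = 0 for all v; ∑_{w ≠ v} z v w = 1 and ∑_{w ≠ v} z w v = 1 for every v (degree constraints); and for every nonempty S ⊆ Fin n with S ≠ univ, ∑_{v ∈ S} ∑_{w ∈ S} z v w ≤ |S| − 1 (subtour elimination constraints). Then there exists s : Fin n → ℝ such that n·(z v w) + s v − s w ≤ n − 1 for all v, w ∈ Fin n with v ≠ w, v ≠ 0 and w ≠ 0. -/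
/-!
Put `c v w = n * z v w - (n - 1)`. For a simple cycle on `k` vertices avoiding the depot `0`, the
subtour elimination constraint for its vertex set bounds the `z`-weight of its arcs by `k - 1`, so
its `c`-weight is at most `n (k - 1) - k (n - 1) = k - n ≤ 0`. Without positive cycles, minus the
largest `c`-weight of a simple path starting at `v` is a feasible potential `s v`: prepending the
arc `v → w` to a simple path from `w` either gives a simple path from `v`, or it closes a cycle
through `v` and continues along a simple path from `v`.
-/

namespace List

variable {α : Type*}

noncomputable def pathWeight (c : α → α → ℝ) (l : List α) : ℝ :=
  (zipWith c l l.tail).sum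

section Weight

variable (c : α → α → ℝ)

@[simp]
lemma pathWeight_singleton (v : α) : pathWeight c [v] = 0 := by
  simp [pathWeight]

@[simp]
lemma pathWeight_cons_cons (a b : α) (l : List α) :
    pathWeight c (a :: b :: l) = c a b + pathWeight c (b :: l) := by
  simp [pathWeight]

lemma pathWeight_append_cons (p : List α) (v : α) (q : List α) :
    pathWeight c (p ++ v :: q) = pathWeight c (p ++ [v]) + pathWeight c (v :: q) := by
  induction p with
  | nil => simp
  | cons a p ih =>
    cases p with
    | nil => simp
    | cons b p => simpa [add_assoc] using ih

end Weight

lemma pathWeight_affine (z : α → α → ℝ) (N K : ℝ) (v : α) (l : List α) :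
    pathWeight (fun a b => N * z a b - K) (v :: l) =
      N * pathWeight z (v :: l) - l.length * K := by
  induction l generalizing v with
  | nil => simp
  | cons w l ih =>
    simp only [pathWeight_cons_cons, ih, length_cons, Nat.cast_succ]
    ring

variable [DecidableEq α] {z : α → α → ℝ}

lemma pathWeight_le_sum_of_nodup_tail (hz : ∀ a b, 0 ≤ z a b) {l : List α} (hl : l.tail.Nodup) :
    pathWeight z l ≤ ∑ a ∈ l.toFinset, ∑ b ∈ l.toFinset, z a b := by
  have harcs : (l.zip l.tail).Nodup :=
    Nodup.of_map Prod.snd (by rwa [map_snd_zip (by simp)])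
  have hsub : (l.zip l.tail).toFinset ⊆ l.toFinset ×ˢ l.toFinset := fun e he => by
    obtain ⟨h₁, h₂⟩ := of_mem_zip (mem_toFinset.1 he)
    exact Finset.mem_product.2 ⟨mem_toFinset.2 h₁, mem_toFinset.2 (mem_of_mem_tail h₂)⟩
  calc pathWeight z l = ∑ e ∈ (l.zip l.tail).toFinset, z e.1 e.2 := by
        rw [pathWeight, ← map_uncurry_zip_eq_zipWith, sum_toFinset _ harcs]; rfl
    _ ≤ ∑ e ∈ l.toFinset ×ˢ l.toFinset, z e.1 e.2 :=
        Finset.sum_le_sum_of_subset_of_nonneg hsub fun e _ _ => hz e.1 e.2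
    _ = ∑ a ∈ l.toFinset, ∑ b ∈ l.toFinset, z a b := Finset.sum_product _ _ _

lemma pathWeight_cycle_nonpos (hz : ∀ a b, 0 ≤ z a b) {N : ℝ} {v : α} {l : List α}
    (hl : (v :: l).Nodup) (hN : ((v :: l).length : ℝ) ≤ N)
    (hsec : ∑ a ∈ (v :: l).toFinset, ∑ b ∈ (v :: l).toFinset, z a b ≤ (v :: l).length - 1) :
    pathWeight (fun a b => N * z a b - (N - 1)) (v :: l ++ [v]) ≤ 0 := by
  have hvertices : (v :: l ++ [v]).toFinset = (v :: l).toFinset := by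
    ext; simp
  have harcs := pathWeight_le_sum_of_nodup_tail hz (l := v :: l ++ [v]) (nodup_append_comm.1 hl)
  rw [hvertices] at harcs
  rw [cons_append, pathWeight_affine, ← cons_append]
  simp only [length_cons, length_append, Nat.cast_add, Nat.cast_one] at hN hsec ⊢
  nlinarith

lemma pathWeight_cycle_nonpos_of_subtour_elim [Fintype α] (hz : ∀ a b, 0 ≤ z a b)
    (hsec : ∀ S : Finset α, S.Nonempty → S ≠ Finset.univ →
      ∑ v ∈ S, ∑ w ∈ S, z v w ≤ (S.card : ℝ) - 1)
    {N : ℝ} (hN : (Fintype.card α : ℝ) ≤ N) {v : α} {l : List α} (hl : (v :: l).Nodup)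
    (hmiss : ∃ x, x ∉ v :: l) :
    pathWeight (fun a b => N * z a b - (N - 1)) (v :: l ++ [v]) ≤ 0 := by
  obtain ⟨x, hx⟩ := hmiss
  have hS := hsec (v :: l).toFinset ⟨v, by simp⟩ fun h => hx (mem_toFinset.1 (h ▸ Finset.mem_univ x))
  rw [toFinset_card_of_nodup hl] at hS
  exact pathWeight_cycle_nonpos hz hl (le_trans (by exact_mod_cast hl.length_le_card) hN) hS

end List

section Potential

open List

variable {α : Type*} (c : α → α → ℝ) (U : Set α)

def simplePathsFrom (v : α) : Set (List α) := {l | (v :: l).Nodup ∧ ∀ x ∈ l, x ∈ U}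

noncomputable def maxPathWeightFrom (v : α) : ℝ :=
  sSup ((fun l => pathWeight c (v :: l)) '' simplePathsFrom U v)

variable [Finite α]

lemma finite_simplePathsFrom (v : α) : (simplePathsFrom U v).Finite := by
  have := Fintype.ofFinite α
  refine (finite_length_le α (Fintype.card α)).subset fun l hl => ?_
  exact (nodup_cons.1 hl.1).2.length_le_card

lemma pathWeight_le_maxPathWeightFrom {v : α} {l : List α} (hl : l ∈ simplePathsFrom U v) :
    pathWeight c (v :: l) ≤ maxPathWeightFrom c U v :=
  le_csSup ((finite_simplePathsFrom U v).image _).bddAbove ⟨l, hl, rfl⟩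

variable {c U}

lemma add_maxPathWeightFrom_le
    (hcyc : ∀ v l, (v :: l).Nodup → (∀ x ∈ v :: l, x ∈ U) →
      pathWeight c (v :: l ++ [v]) ≤ 0)
    {v w : α} (hv : v ∈ U) (hw : w ∈ U) (hvw : v ≠ w) :
    c v w + maxPathWeightFrom c U w ≤ maxPathWeightFrom c U v := by
  rw [← le_sub_iff_add_le']
  refine csSup_le ⟨_, [], by simp [simplePathsFrom], rfl⟩ ?_
  rintro _ ⟨l, ⟨hl, hlU⟩, rfl⟩
  rw [le_sub_iff_add_le']
  by_cases hvl : v ∈ l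
  · obtain ⟨p, q, rfl⟩ := append_of_mem hvl
    have hcycle : (v :: w :: p).Nodup := by
      simp only [nodup_cons, nodup_append, mem_append, mem_cons] at hl ⊢
      grind
    have hq : q ∈ simplePathsFrom U v :=
      ⟨hl.sublist ((sublist_append_right _ _).cons w), fun x hx => hlU x (by simp [hx])⟩
    calc c v w + pathWeight c (w :: (p ++ v :: q))
        = pathWeight c (v :: w :: p ++ [v]) + pathWeight c (v :: q) := by
          rw [← cons_append, pathWeight_append_cons]; simp [add_assoc]
      _ ≤ 0 + maxPathWeightFrom c U v := by
          gcongr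
          · exact hcyc v (w :: p) hcycle <| forall_mem_cons.2
              ⟨hv, forall_mem_cons.2 ⟨hw, fun x hx => hlU x (mem_append_left _ hx)⟩⟩
          · exact pathWeight_le_maxPathWeightFrom c U hq
      _ = maxPathWeightFrom c U v := zero_add _
  · have hwl : w :: l ∈ simplePathsFrom U v :=
      ⟨nodup_cons.2 ⟨by simp [hvw, hvl], hl⟩, forall_mem_cons.2 ⟨hw, hlU⟩⟩
    simpa using pathWeight_le_maxPathWeightFrom c U hwl

/-- A simple cycle through the distinct vertices `v :: l` is encoded as the closed walk
`v :: l ++ [v]`. -/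
theorem exists_potential_of_cycle_nonpos
    (hcyc : ∀ v l, (v :: l).Nodup → (∀ x ∈ v :: l, x ∈ U) →
      pathWeight c (v :: l ++ [v]) ≤ 0) :
    ∃ s : α → ℝ, ∀ v ∈ U, ∀ w ∈ U, v ≠ w → c v w + s v ≤ s w :=
  ⟨fun v => -maxPathWeightFrom c U v, fun v hv w hw hvw => by
    linarith [add_maxPathWeightFrom_le hcyc hv hw hvw]⟩

end Potential

/-- The SEC polytope is contained in the MTZ polytope: every fractional point
`z` satisfying the degree constraints and the subtour elimination constraints
can be completed with values `s v` satisfying the Miller–Tucker–Zemlin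
constraints. -/
theorem stmt_14 (n : ℕ) (hn : 3 ≤ n) (z : Fin n → Fin n → ℝ)
    (h0 : ∀ v w, 0 ≤ z v w)
    (hsec : ∀ S : Finset (Fin n), S.Nonempty → S ≠ Finset.univ →
      ∑ v ∈ S, ∑ w ∈ S, z v w ≤ (S.card : ℝ) - 1) :
    ∃ s : Fin n → ℝ, ∀ v w : Fin n, v ≠ w → v ≠ ⟨0, by omega⟩ → w ≠ ⟨0, by omega⟩ →
      (n : ℝ) * z v w + s v - s w ≤ (n : ℝ) - 1 := by
  obtain ⟨s, hs⟩ := exists_potential_of_cycle_nonpos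
    (c := fun a b => (n : ℝ) * z a b - (n - 1)) (U := {v | v ≠ ⟨0, by omega⟩})
    fun v l hl hlU => List.pathWeight_cycle_nonpos_of_subtour_elim h0 hsec (by simp) hl
      ⟨_, fun h => hlU _ h rfl⟩
  exact ⟨s, fun v w hvw hv hw => by linarith [hs v hv w hw hvw]⟩
end
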